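/- Let N be a 3×3 real matrix with det N = 1 such that −1 is not an eigenvalue. N has an eigenvalue on the unit circle if and only if tr N = tr cof N. -/

import Mathlib

/-!
The characteristic polynomial of `N` is `X³ - (tr N) X² + (tr cof N) X - 1`, so its value at `1`
is `tr cof N - tr N`. A root `μ` on the unit circle has `μ̄ = μ⁻¹`, and as the coefficients are
real, `μ⁻¹` is a root as well; adding the relation for `μ` to `μ³` times the one for `μ⁻¹` leaves
`(tr cof N - tr N) μ (1 + μ) = 0`.
-/

open Matrix Polynomial

noncomputable def cof (N : Matrix (Fin 3) (Fin 3) ℝ) : Matrix (Fin 3) (Fin 3) ℝ :=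
  (Matrix.adjugate N)ᵀ

theorem Matrix.charpoly_fin_three {R : Type*} [CommRing R] (M : Matrix (Fin 3) (Fin 3) R) :
    M.charpoly = X ^ 3 - C M.trace * X ^ 2 + C M.adjugate.trace * X - C M.det := by
  rw [charpoly, det_fin_three, adjugate_fin_three, det_fin_three]
  simp only [charmatrix_apply, trace_fin_three, of_apply, cons_val', cons_val_zero, cons_val_one,
    cons_val_two, diagonal_apply]
  simp
  ring

theorem mem_roots_charpoly_iff_of_det_eq_one {N : Matrix (Fin 3) (Fin 3) ℝ} (hdet : N.det = 1)
    {z : ℂ} :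
    z ∈ (N.charpoly.map (algebraMap ℝ ℂ)).roots ↔
      z ^ 3 - N.trace * z ^ 2 + (cof N).trace * z - 1 = 0 := by
  rw [mem_roots_map_of_injective (algebraMap ℝ ℂ).injective N.charpoly_monic.ne_zero,
    charpoly_fin_three, hdet, cof, trace_transpose]
  simp

theorem eq_of_root_of_norm_eq_one {a b : ℝ} {μ : ℂ} (hμ : ‖μ‖ = 1) (hμ1 : μ ≠ -1)
    (h : μ ^ 3 - a * μ ^ 2 + b * μ - 1 = 0) : a = b := by
  have hμ0 : μ ≠ 0 := norm_ne_zero_iff.mp (by simp [hμ])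
  have hμ1' : 1 + μ ≠ 0 := fun h0 => hμ1 (by linear_combination h0)
  have h_inv := congrArg (starRingEnd ℂ) h
  simp only [map_sub, map_add, map_mul, map_pow, Complex.conj_ofReal, map_one, map_zero,
    ← Complex.inv_eq_conj hμ] at h_inv
  field_simp at h_inv
  have : ((b : ℂ) - a) * μ * (1 + μ) = 0 := by linear_combination h + h_inv
  have : (a : ℂ) = b := by simpa [hμ0, hμ1', sub_eq_zero, eq_comm] using this
  exact_mod_cast this

/-- Let `N` be a 3×3 real matrix with `det N = 1` such that `−1` is not an
eigenvalue.  Then `N` has an eigenvalue on the unit circle iff `tr N = tr cof N`. -/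
theorem stmt_13 (N : Matrix (Fin 3) (Fin 3) ℝ) (hdet : N.det = 1)
    (hm1 : (-1 : ℂ) ∉ ((N.charpoly).map (algebraMap ℝ ℂ)).roots) :
    (∃ μ ∈ ((N.charpoly).map (algebraMap ℝ ℂ)).roots, ‖μ‖ = 1)
      ↔ N.trace = (cof N).trace := by
  simp only [mem_roots_charpoly_iff_of_det_eq_one hdet] at hm1 ⊢
  constructor
  · rintro ⟨μ, hμ, hnorm⟩
    exact eq_of_root_of_norm_eq_one hnorm (by rintro rfl; exact hm1 hμ) hμ
  · intro htr
    exact ⟨1, by rw [htr]; ring, by simp⟩
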